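/- arXiv:2409.03132 — 3 statements merged into one kernel-verified Lean document; each statement's English description precedes it below -/
import Mathlib

section
/- Gronwall's Inequality III (Lemma A.4): Let E be a finite-dimensional real normed vector space, and let C₀, C₁, C₂, C₃ > 0. Let X⁰ : E → E be Lipschitz with constant C₃, and let X¹ : E × [0, ∞) → E satisfy ‖X¹(z, t)‖ ≤ C₁ t + C₂ for all z ∈ E and t ≥ 0. Fix ρ and ρ₁ with 0 < ρ₁ < ρ < 1 and k with 0 < k < (1 − ρ)/C₃. Then there exist ε₀ > 0 and K > 0 such that the following holds: for every ε with 0 < ε < ε₀, and for every pair of differentiable curves z₀, z_ε : [0, ∞) → E satisfying z₀'(t) = X⁰(z₀(t)), z_ε'(t) = X⁰(z_ε(t)) + ε X¹(z_ε(t), t) for all t ≥ 0, and ‖z₀(0) − z_ε(0)‖ ≤ C₀ ε, one has ‖z₀(t) − z_ε(t)‖ ≤ K ε^{ρ₁} for all t with 0 ≤ t ≤ k·ln(1/ε). -/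
/-!
The difference `z₀ - zε` grows at rate at most `C₃ ‖z₀ - zε‖ + ε (C₁ T + C₂)` on `[0, T]`, so
Gronwall's inequality bounds it by `(C₀ ε + ε (C₁ T + C₂) / C₃) e^{C₃ T}`. For `T = k ln(1/ε)`
the exponential is `ε^{-C₃ k}`, and `1 - C₃ k ≥ ρ`, so the bound is at most a constant times
`(1 + ln(1/ε)) ε^ρ`; the logarithm is absorbed by the gap `ρ - ρ₁`.
-/

open Real Set
open scoped NNReal

theorem gronwallBound_le_mul_exp {δ K ε : ℝ} (hK : 0 < K) (hε : 0 ≤ ε) (x : ℝ) :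
    gronwallBound δ K ε x ≤ (δ + ε / K) * exp (K * x) := by
  rw [gronwallBound_of_K_ne_0 hK.ne']
  have : 0 ≤ ε / K := by positivity
  linarith

theorem norm_sub_le_gronwallBound_of_perturbation {E : Type*} [NormedAddCommGroup E]
    [NormedSpace ℝ E] {X : E → E} {K : ℝ≥0} (hX : LipschitzWith K X) {P z w : ℝ → E}
    {a b δ η : ℝ} (hz : ∀ t ∈ Icc a b, HasDerivAt z (X (z t)) t)
    (hw : ∀ t ∈ Icc a b, HasDerivAt w (X (w t) + P t) t) (hP : ∀ t ∈ Icc a b, ‖P t‖ ≤ η)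
    (ha : ‖z a - w a‖ ≤ δ) :
    ∀ t ∈ Icc a b, ‖z t - w t‖ ≤ gronwallBound δ K η (t - a) := by
  have hηf : ∀ t ∈ Ico a b, dist (X (z t)) (X (z t)) ≤ 0 := fun t _ => by simp
  have hηg : ∀ t ∈ Ico a b, dist (X (w t) + P t) (X (w t)) ≤ η := fun t ht => by
    simpa [dist_eq_norm] using hP t (Ico_subset_Icc_self ht)
  simpa [dist_eq_norm] using dist_le_of_approx_trajectories_ODE (v := fun _ => X)
    (fun _ => hX) (fun t ht => (hz t ht).continuousAt.continuousWithinAt)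
    (fun t ht => (hz t (Ico_subset_Icc_self ht)).hasDerivWithinAt) hηf
    (fun t ht => (hw t ht).continuousAt.continuousWithinAt)
    (fun t ht => (hw t (Ico_subset_Icc_self ht)).hasDerivWithinAt) hηg (by simpa [dist_eq_norm])

theorem exp_mul_log_one_div {ε : ℝ} (hε : 0 < ε) (c : ℝ) : exp (c * log (1 / ε)) = ε ^ (-c) := by
  rw [rpow_def_of_pos hε, one_div, log_inv]
  ring_nf

theorem log_one_div_mul_rpow_le {ε ρ₁ ρ : ℝ} (hε : 0 < ε) (hρ₁ρ : ρ₁ < ρ) :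
    log (1 / ε) * ε ^ ρ ≤ ε ^ ρ₁ / (ρ - ρ₁) := by
  have hgap : 0 < ρ - ρ₁ := sub_pos.mpr hρ₁ρ
  calc log (1 / ε) * ε ^ ρ ≤ (1 / ε) ^ (ρ - ρ₁) / (ρ - ρ₁) * ε ^ ρ := by
        gcongr; exact log_le_rpow_div (by positivity) hgap
    _ = ε ^ ρ₁ / (ρ - ρ₁) := by
        rw [one_div, inv_rpow hε.le, ← rpow_neg hε.le, div_mul_eq_mul_div, ← rpow_add hε]
        ring_nf

theorem gronwall_III_general {E : Type*} [NormedAddCommGroup E] [NormedSpace ℝ E]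
    (C₀ C₁ C₂ C₃ : ℝ) (hC₀ : 0 < C₀) (hC₁ : 0 < C₁) (hC₂ : 0 < C₂) (hC₃ : 0 < C₃)
    (X0 : E → E) (hX0 : LipschitzWith (Real.toNNReal C₃) X0)
    (X1 : E → ℝ → E) (hX1 : ∀ z t, 0 ≤ t → ‖X1 z t‖ ≤ C₁ * t + C₂)
    (ρ ρ₁ k : ℝ) (hρ₁ρ : ρ₁ < ρ)
    (hk : 0 < k) (hkC : k < (1 - ρ) / C₃) :
    ∃ ε₀ > 0, ∃ K > 0, ∀ ε, 0 < ε → ε < ε₀ →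
      ∀ z₀ zε : ℝ → E,
        (∀ t, 0 ≤ t → HasDerivAt z₀ (X0 (z₀ t)) t) →
        (∀ t, 0 ≤ t → HasDerivAt zε (X0 (zε t) + ε • X1 (zε t) t) t) →
        ‖z₀ 0 - zε 0‖ ≤ C₀ * ε →
        ∀ t, 0 ≤ t → t ≤ k * Real.log (1 / ε) →
          ‖z₀ t - zε t‖ ≤ K * ε ^ ρ₁ := by
  have hgap : 0 < ρ - ρ₁ := sub_pos.mpr hρ₁ρ
  have hC₃k : C₃ * k ≤ 1 - ρ := by linarith [(lt_div_iff₀' hC₃).mp hkC]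
  refine ⟨1, one_pos, C₀ + C₂ / C₃ + C₁ * k / C₃ / (ρ - ρ₁), by positivity, ?_⟩
  intro ε hε hε1 z₀ zε hz₀ hzε h0 t ht htT
  set L := log (1 / ε)
  have hL : 0 ≤ L := log_nonneg (one_le_one_div hε hε1.le)
  have hP : ∀ s ∈ Icc 0 (k * L), ‖ε • X1 (zε s) s‖ ≤ ε * (C₁ * (k * L) + C₂) := fun s hs => by
    rw [norm_smul, norm_of_nonneg hε.le]
    gcongr
    exact (hX1 _ _ hs.1).trans (by gcongr; exact hs.2)
  calc ‖z₀ t - zε t‖ ≤ gronwallBound (C₀ * ε) C₃ (ε * (C₁ * (k * L) + C₂)) t := by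
        simpa [coe_toNNReal _ hC₃.le] using norm_sub_le_gronwallBound_of_perturbation hX0
          (fun s hs => hz₀ s hs.1) (fun s hs => hzε s hs.1) hP h0 t ⟨ht, htT⟩
    _ ≤ gronwallBound (C₀ * ε) C₃ (ε * (C₁ * (k * L) + C₂)) (k * L) :=
        gronwallBound_mono (by positivity) (by positivity) hC₃.le htT
    _ ≤ (C₀ * ε + ε * (C₁ * (k * L) + C₂) / C₃) * exp (C₃ * (k * L)) :=
        gronwallBound_le_mul_exp hC₃ (by positivity) _
    _ = (C₀ + C₂ / C₃ + C₁ * k / C₃ * L) * ε ^ (1 - C₃ * k) := by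
        rw [show C₃ * (k * L) = C₃ * k * log (1 / ε) by ring, exp_mul_log_one_div hε,
          sub_eq_add_neg, rpow_add hε, rpow_one]
        field_simp
        ring
    _ ≤ (C₀ + C₂ / C₃ + C₁ * k / C₃ * L) * ε ^ ρ := by
        gcongr _ * ?_
        exact rpow_le_rpow_of_exponent_ge hε hε1.le (by linarith)
    _ = (C₀ + C₂ / C₃) * ε ^ ρ + C₁ * k / C₃ * (L * ε ^ ρ) := by ring
    _ ≤ (C₀ + C₂ / C₃) * ε ^ ρ₁ + C₁ * k / C₃ * (ε ^ ρ₁ / (ρ - ρ₁)) := by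
        gcongr (C₀ + C₂ / C₃) * ?_ + _ * ?_
        · exact rpow_le_rpow_of_exponent_ge hε hε1.le hρ₁ρ.le
        · exact log_one_div_mul_rpow_le hε hρ₁ρ
    _ = (C₀ + C₂ / C₃ + C₁ * k / C₃ / (ρ - ρ₁)) * ε ^ ρ₁ := by ring

/-- Gronwall's Inequality III (Lemma A.4). -/
theorem gronwall_III {E : Type*} [NormedAddCommGroup E] [NormedSpace ℝ E]
    [FiniteDimensional ℝ E]
    (C₀ C₁ C₂ C₃ : ℝ) (hC₀ : 0 < C₀) (hC₁ : 0 < C₁) (hC₂ : 0 < C₂) (hC₃ : 0 < C₃)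
    (X0 : E → E) (hX0 : LipschitzWith (Real.toNNReal C₃) X0)
    (X1 : E → ℝ → E) (hX1 : ∀ z t, 0 ≤ t → ‖X1 z t‖ ≤ C₁ * t + C₂)
    (ρ ρ₁ k : ℝ) (hρ₁ : 0 < ρ₁) (hρ₁ρ : ρ₁ < ρ) (hρ : ρ < 1)
    (hk : 0 < k) (hkC : k < (1 - ρ) / C₃) :
    ∃ ε₀ > 0, ∃ K > 0, ∀ ε, 0 < ε → ε < ε₀ →
      ∀ z₀ zε : ℝ → E,
        (∀ t, 0 ≤ t → HasDerivAt z₀ (X0 (z₀ t)) t) →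
        (∀ t, 0 ≤ t → HasDerivAt zε (X0 (zε t) + ε • X1 (zε t) t) t) →
        ‖z₀ 0 - zε 0‖ ≤ C₀ * ε →
        ∀ t, 0 ≤ t → t ≤ k * Real.log (1 / ε) →
          ‖z₀ t - zε t‖ ≤ K * ε ^ ρ₁ :=
  gronwall_III_general C₀ C₁ C₂ C₃ hC₀ hC₁ hC₂ hC₃ X0 hX0 X1 hX1 ρ ρ₁ k hρ₁ρ hk hkC
end

section
/- Persistence of a non-degenerate zero under C¹-small perturbation (abstract form of Lemma 7.2): Let M : ℝ → ℝ be continuously differentiable, let τ* ∈ ℝ satisfy M(τ*) = 0 and M'(τ*) ≠ 0, and let C > 0, ρ > 0, and let J be an open interval containing τ*. Suppose (f_ε)_{ε > 0} is a family of continuously differentiable functions ℝ → ℝ such that |f_ε(τ) − ε·M(τ)| ≤ C·ε^{1+ρ} and |f_ε'(τ) − ε·M'(τ)| ≤ C·ε^{1+ρ} for all τ ∈ J and all ε > 0. Then there exist ε₁ > 0 and K > 0 such that for every ε with 0 < ε < ε₁ there exists τ_ε ∈ J with f_ε(τ_ε) = 0, |τ_ε − τ*| ≤ K·ε^{ρ},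 and f_ε'(τ_ε) ≠ 0. -/
/-!
Write `m = M'(τ*)` and `η = C ε^ρ`, so that `f_ε` is `εη`-close to `ε M` in `C¹`. Near `τ*` the
derivative of `M` stays within `|m|/2` of `m`, so by the mean value inequality `m M(τ*+s)` has the
sign of `s` and size at least `m² |s| / 2`. At `s = ±2η/|m|` this dominates the error `|m| ε η`, so
`m f_ε` changes sign on `[τ* - t, τ* + t]` with `t = 2η/|m| = (2C/|m|) ε^ρ`, and the intermediate
value theorem gives the zero. There `|f_ε'| ≥ ε (|m|/2 - η) > 0` once `η < |m|/2`.
-/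

open Real Set Filter Topology Metric

theorem abs_sub_sub_mul_le_of_abs_deriv_sub_le {M : ℝ → ℝ} {s : Set ℝ} {m L x y : ℝ}
    (hM : Differentiable ℝ M) (hs : Convex ℝ s) (hM' : ∀ τ ∈ s, |deriv M τ - m| ≤ L)
    (hx : x ∈ s) (hy : y ∈ s) :
    |M y - M x - m * (y - x)| ≤ L * |y - x| := by
  have hderiv : ∀ τ, deriv (fun τ => M τ - m * τ) τ = deriv M τ - m := fun τ => by
    simpa using deriv_fun_sub (hM τ) (differentiableAt_id.const_mul m)
  have := hs.norm_image_sub_le_of_norm_deriv_le (f := fun τ => M τ - m * τ)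
    (fun τ _ => (hM τ).sub (differentiableAt_id.const_mul m))
    (fun τ hτ => by simpa only [hderiv, Real.norm_eq_abs] using hM' τ hτ) hx hy
  simp only [Real.norm_eq_abs] at this
  convert this using 2
  ring

theorem abs_mul_sub_mul_sq_le_of_close {M g : ℝ → ℝ} {x y δ m c η t : ℝ}
    (hM : Differentiable ℝ M) (hMx : M x = 0)
    (hM' : ∀ τ ∈ closedBall x δ, |deriv M τ - m| ≤ |m| / 2)
    (hc : 0 < c) (ht : 2 * η ≤ |m| * t) (hy : y ∈ closedBall x δ) (hyx : |y - x| = t)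
    (hgy : |g y - c * M y| ≤ c * η) :
    |m * g y - c * m ^ 2 * (y - x)| ≤ c * m ^ 2 * t := by
  have hMy := abs_sub_sub_mul_le_of_abs_deriv_sub_le hM (convex_closedBall x δ) hM'
    (mem_closedBall_self (dist_nonneg.trans hy)) hy
  rw [hMx, sub_zero, hyx] at hMy
  calc |m * g y - c * m ^ 2 * (y - x)|
      = |m * (g y - c * M y) + c * m * (M y - m * (y - x))| := by ring_nf
    _ ≤ |m| * (c * η) + c * |m| * (|m| / 2 * t) := by
      refine (abs_add_le _ _).trans (add_le_add ?_ ?_)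
      · rw [abs_mul]
        exact mul_le_mul_of_nonneg_left hgy (abs_nonneg m)
      · rw [abs_mul, abs_mul, abs_of_pos hc]
        exact mul_le_mul_of_nonneg_left hMy (by positivity)
    _ ≤ c * m ^ 2 * t := by
      rw [← sq_abs]
      nlinarith [mul_le_mul_of_nonneg_left ht (by positivity : 0 ≤ c * |m|)]

theorem exists_zero_deriv_ne_zero_of_C1_close {M g : ℝ → ℝ} {x δ m c η t : ℝ}
    (hM : Differentiable ℝ M) (hg : Continuous g) (hMx : M x = 0)
    (hM' : ∀ τ ∈ closedBall x δ, |deriv M τ - m| ≤ |m| / 2)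
    (hc : 0 < c) (hη : η < |m| / 2) (ht0 : 0 ≤ t) (ht : 2 * η ≤ |m| * t) (htδ : t ≤ δ)
    (hg0 : ∀ τ ∈ closedBall x δ, |g τ - c * M τ| ≤ c * η)
    (hg1 : ∀ τ ∈ closedBall x δ, |deriv g τ - c * deriv M τ| ≤ c * η) :
    ∃ z ∈ closedBall x t, g z = 0 ∧ deriv g z ≠ 0 := by
  have hm : m ≠ 0 := by
    have := (abs_nonneg _).trans (hg0 x (mem_closedBall_self (ht0.trans htδ)))
    rw [← abs_pos]
    nlinarith
  have hend : ∀ y, |y - x| = t → |m * g y - c * m ^ 2 * (y - x)| ≤ c * m ^ 2 * t :=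
    fun y hyx ↦
      have hy : y ∈ closedBall x δ := by rwa [mem_closedBall, Real.dist_eq, hyx]
      abs_mul_sub_mul_sq_le_of_close hM hMx hM' hc ht hy hyx (hg0 y hy)
  have hleft : m * g (x - t) ≤ 0 := by
    linarith [(abs_le.1 (hend (x - t) (by simp [abs_of_nonneg ht0]))).2]
  have hright : 0 ≤ m * g (x + t) := by
    linarith [(abs_le.1 (hend (x + t) (by simp [abs_of_nonneg ht0]))).1]
  obtain ⟨z, hz, hmgz⟩ := intermediate_value_Icc (by linarith)
    (continuous_const.mul hg).continuousOn ⟨hleft, hright⟩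
  rw [← Real.closedBall_eq_Icc] at hz
  have hzδ : z ∈ closedBall x δ := closedBall_subset_closedBall htδ hz
  refine ⟨z, hz, (mul_eq_zero.1 hmgz).resolve_left hm, fun hg'z => ?_⟩
  have hM'z : |m| - |m| / 2 ≤ |deriv M z| := by
    linarith [abs_sub_abs_le_abs_sub m (deriv M z), abs_sub_comm m (deriv M z), hM' z hzδ]
  have hg1z := hg1 z hzδ
  rw [hg'z, zero_sub, abs_neg, abs_mul, abs_of_pos hc] at hg1z
  nlinarith

theorem tendsto_rpow_nhdsGT_zero {ρ : ℝ} (hρ : 0 < ρ) :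
    Tendsto (fun ε : ℝ => ε ^ ρ) (𝓝[>] 0) (𝓝 0) := by
  simpa [zero_rpow hρ.ne'] using
    (continuousAt_rpow_const 0 ρ (Or.inr hρ.le)).tendsto.mono_left nhdsWithin_le_nhds

/-- Persistence of a non-degenerate zero under C¹-small perturbation
(abstract form of Lemma 7.2). -/
theorem nondegenerate_zero_persists
    (M : ℝ → ℝ) (hM : ContDiff ℝ 1 M)
    (τstar : ℝ) (hMz : M τstar = 0) (hMd : deriv M τstar ≠ 0)
    (C ρ : ℝ) (hC : 0 < C) (hρ : 0 < ρ)
    (a b : ℝ) (hτstar : τstar ∈ Set.Ioo a b)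
    (f : ℝ → ℝ → ℝ)
    (hf : ∀ ε : ℝ, 0 < ε → ContDiff ℝ 1 (f ε))
    (hclose : ∀ ε : ℝ, 0 < ε → ∀ τ ∈ Set.Ioo a b,
      |f ε τ - ε * M τ| ≤ C * ε ^ (1 + ρ))
    (hclose' : ∀ ε : ℝ, 0 < ε → ∀ τ ∈ Set.Ioo a b,
      |deriv (f ε) τ - ε * deriv M τ| ≤ C * ε ^ (1 + ρ)) :
    ∃ ε₁ > 0, ∃ K > 0, ∀ ε : ℝ, 0 < ε → ε < ε₁ →
      ∃ τε ∈ Set.Ioo a b,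
        f ε τε = 0 ∧ |τε - τstar| ≤ K * ε ^ ρ ∧ deriv (f ε) τε ≠ 0 := by
  set m := deriv M τstar
  have hm : 0 < |m| := abs_pos.2 hMd
  obtain ⟨δ, hδ, hball⟩ : ∃ δ > 0,
      closedBall τstar δ ⊆ Ioo a b ∩ deriv M ⁻¹' closedBall m (|m| / 2) :=
    nhds_basis_closedBall.mem_iff.1 <| inter_mem (Ioo_mem_nhds hτstar.1 hτstar.2) <|
      (hM.continuous_deriv le_rfl).continuousAt.preimage_mem_nhds
        (closedBall_mem_nhds m (by positivity))
  set K := 2 * C / |m|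
  have hK : |m| * K = 2 * C := mul_div_cancel₀ _ hm.ne'
  have hsmall : ∀ᶠ ε in 𝓝[>] 0, C * ε ^ ρ < |m| / 2 ∧ K * ε ^ ρ < δ := by
    have h := tendsto_rpow_nhdsGT_zero hρ
    simpa using (((h.const_mul C).eventually (gt_mem_nhds (by simpa using half_pos hm))).and
      ((h.const_mul K).eventually (gt_mem_nhds (by simpa using hδ))))
  obtain ⟨ε₁, hε₁, hsub⟩ := mem_nhdsGT_iff_exists_Ioo_subset.1 hsmall
  refine ⟨ε₁, hε₁, K, by positivity, fun ε hε hεε₁ => ?_⟩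
  obtain ⟨hη, ht⟩ := hsub ⟨hε, hεε₁⟩
  have hpow : C * ε ^ (1 + ρ) = ε * (C * ε ^ ρ) := by rw [rpow_add hε, rpow_one]; ring
  obtain ⟨z, hz, hfz, hf'z⟩ := exists_zero_deriv_ne_zero_of_C1_close
    (hM.differentiable one_ne_zero) (hf ε hε).continuous hMz
    (fun τ hτ => by simpa [Real.dist_eq] using (hball hτ).2) hε hη (by positivity)
    (le_of_eq (by rw [← mul_assoc |m|, hK, mul_assoc])) ht.le
    (fun τ hτ => hpow ▸ hclose ε hε τ (hball hτ).1)
    (fun τ hτ => hpow ▸ hclose' ε hε τ (hball hτ).1)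
  exact ⟨z, (hball (closedBall_subset_closedBall ht.le hz)).1, hfz,
    by simpa [Real.dist_eq] using hz, hf'z⟩
end

section
/- Second derivative of the autocorrelation of the Melnikov process (second spectral moment formula, part of Lemma on the process M): Let F : ℝ → ℝ be continuously differentiable with |F(s)| ≤ C·e^{−λ|s|} and |F'(s)| ≤ C·e^{−λ|s|} for all s ∈ ℝ, for some constants C ≥ 0 and λ > 0, and let r : ℝ → ℝ be twice continuously differentiable with r, r', and r'' bounded. Define ρ(h) = ∫_ℝ ∫_ℝ F(s₁)·F(s₂)·r(s₂ − s₁ + h) ds₁ ds₂. Then ρ is twice differentiable on ℝ and ρ''(h) = −∫_ℝ ∫_ℝ F'(s₁)·F'(s₂)·r(s₂ − s₁ + h) ds₁ ds₂ for every h ∈ ℝ. In particular, the second spectral moment χ₂ = −ρ''(0) equals ∫_ℝ ∫_ℝ F'(s₁)·F'(s₂)·r(s₂ − s₁) ds₁ ds₂. -/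
/-!
Differentiating under the integral sign puts `r'(s₂ - s₁ + h)` in place of `r(s₂ - s₁ + h)`.
Since `r'(s₂ - s₁ + h)` is both `∂/∂s₂` and `-∂/∂s₁` of `r(s₂ - s₁ + h)`, one integration by
parts in `s₂` turns `ρ'` into `-∫∫ F(s₁) F'(s₂) r(s₂ - s₁ + h)`, and after differentiating once
more, one integration by parts in `s₁` moves the remaining derivative onto the first kernel.
The exponential decay makes `F` and `F'` integrable, and since `r` and `r'` are bounded every
integrand is dominated by `|F(s₁)| |F(s₂)|` times a constant (or the same with `F'`).
-/

open MeasureTheory Real Set Filter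

lemma integrable_exp_neg_mul_abs {lam : ℝ} (hlam : 0 < lam) :
    Integrable fun s : ℝ => exp (-lam * |s|) := by
  have hIoi : IntegrableOn (fun s : ℝ => exp (-lam * |s|)) (Ioi 0) := by
    refine (exp_neg_integrableOn_Ioi 0 hlam).congr_fun (fun x hx => ?_) measurableSet_Ioi
    rw [abs_of_pos hx]
  rw [← integrableOn_univ, ← Iio_union_Ici (a := (0 : ℝ)), integrableOn_union,
    integrableOn_Ici_iff_integrableOn_Ioi]
  refine ⟨?_, hIoi⟩
  rw [← (Measure.measurePreserving_neg (volume : Measure ℝ)).integrableOn_comp_preimage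
      (Homeomorph.neg ℝ).measurableEmbedding]
  simpa [Function.comp_def, neg_preimage, neg_Iio, abs_neg] using hIoi

lemma integrable_of_abs_le_mul_exp_neg_mul_abs {g : ℝ → ℝ} {C lam : ℝ} (hlam : 0 < lam)
    (hg : AEStronglyMeasurable g) (hgb : ∀ s, |g s| ≤ C * exp (-lam * |s|)) :
    Integrable g :=
  ((integrable_exp_neg_mul_abs hlam).const_mul C).mono' hg
    (Eventually.of_forall fun s => (norm_eq_abs (g s)).trans_le (hgb s))

lemma integral_mul_deriv_eq_neg_of_bounded {u u' v v' : ℝ → ℝ} {M₀ M₁ : ℝ}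
    (hu : ∀ x, HasDerivAt u (u' x) x) (hv : ∀ x, HasDerivAt v (v' x) x)
    (hui : Integrable u) (hu'i : Integrable u') (hv'm : AEStronglyMeasurable v')
    (hvb : ∀ x, |v x| ≤ M₀) (hv'b : ∀ x, |v' x| ≤ M₁) :
    ∫ x, u x * v' x = -∫ x, u' x * v x := by
  have hvm : AEStronglyMeasurable v :=
    (continuous_iff_continuousAt.2 fun x => (hv x).continuousAt).aestronglyMeasurable
  exact integral_mul_deriv_eq_deriv_mul_of_integrable (fun x _ => hu x) (fun x _ => hv x)
    (hui.mul_bdd hv'm (Eventually.of_forall hv'b)) (hu'i.mul_bdd hvm (Eventually.of_forall hvb))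
    (hui.mul_bdd hvm (Eventually.of_forall hvb))

/-- The autocorrelation of the Melnikov process is `crossCorr F F r`. -/
noncomputable def crossCorr (f g w : ℝ → ℝ) (h : ℝ) : ℝ :=
  ∫ p : ℝ × ℝ, f p.1 * g p.2 * w (p.2 - p.1 + h)

section CrossCorr

variable {f g w : ℝ → ℝ} {M₀ M₁ : ℝ}

lemma integrable_crossCorr_integrand (hf : Integrable f) (hg : Integrable g) (hw : Continuous w)
    (hwb : ∀ x, |w x| ≤ M₀) (h : ℝ) :
    Integrable fun p : ℝ × ℝ => f p.1 * g p.2 * w (p.2 - p.1 + h) :=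
  (hf.mul_prod hg).mul_bdd (hw.comp (by fun_prop)).aestronglyMeasurable
    (Eventually.of_forall fun p => hwb _)

lemma crossCorr_eq_integral_integral (hf : Integrable f) (hg : Integrable g) (hw : Continuous w)
    (hwb : ∀ x, |w x| ≤ M₀) (h : ℝ) :
    crossCorr f g w h = ∫ s₁, ∫ s₂, f s₁ * g s₂ * w (s₂ - s₁ + h) :=
  integral_prod _ (integrable_crossCorr_integrand hf hg hw hwb h)

lemma hasDerivAt_crossCorr (hf : Integrable f) (hg : Integrable g) (hw : Differentiable ℝ w)
    (hw' : Continuous (deriv w)) (hwb : ∀ x, |w x| ≤ M₀) (hw'b : ∀ x, |deriv w x| ≤ M₁)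
    (h : ℝ) : HasDerivAt (crossCorr f g w) (crossCorr f g (deriv w) h) h := by
  refine (hasDerivAt_integral_of_dominated_loc_of_deriv_le
    (F := fun h' (p : ℝ × ℝ) => f p.1 * g p.2 * w (p.2 - p.1 + h'))
    (F' := fun h' (p : ℝ × ℝ) => f p.1 * g p.2 * deriv w (p.2 - p.1 + h'))
    (bound := fun p : ℝ × ℝ => ‖f p.1 * g p.2‖ * M₁)
    univ_mem (Eventually.of_forall fun h' =>
      (integrable_crossCorr_integrand hf hg hw.continuous hwb h').aestronglyMeasurable)
    (integrable_crossCorr_integrand hf hg hw.continuous hwb h)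
    (integrable_crossCorr_integrand hf hg hw' hw'b h).aestronglyMeasurable
    (Eventually.of_forall fun p h' _ => ?_) ((hf.mul_prod hg).norm.mul_const M₁)
    (Eventually.of_forall fun p h' _ => ?_)).2
  · rw [norm_mul]
    exact mul_le_mul_of_nonneg_left ((norm_eq_abs _).trans_le (hw'b _)) (norm_nonneg _)
  · have hshift : HasDerivAt (fun x : ℝ => p.2 - p.1 + x) 1 h' := by
      simpa using (hasDerivAt_id h').const_add (p.2 - p.1)
    simpa using ((hw _).hasDerivAt.comp h' hshift).const_mul (f p.1 * g p.2)

lemma crossCorr_deriv_eq_neg_crossCorr_deriv_right (hf : Integrable f) (hgd : Differentiable ℝ g)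
    (hg : Integrable g) (hg' : Integrable (deriv g)) (hw : Differentiable ℝ w)
    (hw' : Continuous (deriv w)) (hwb : ∀ x, |w x| ≤ M₀) (hw'b : ∀ x, |deriv w x| ≤ M₁)
    (h : ℝ) : crossCorr f g (deriv w) h = -crossCorr f (deriv g) w h := by
  rw [crossCorr_eq_integral_integral hf hg hw' hw'b,
    crossCorr_eq_integral_integral hf hg' hw.continuous hwb, ← integral_neg]
  congr 1 with s₁
  have hshift (x : ℝ) : HasDerivAt (fun s => w (s - s₁ + h)) (deriv w (x - s₁ + h)) x := by
    simpa [Function.comp_def] using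
      (hw _).hasDerivAt.comp x (((hasDerivAt_id' x).sub_const s₁).add_const h)
  simp_rw [mul_assoc, integral_const_mul]
  rw [integral_mul_deriv_eq_neg_of_bounded (fun x => (hgd x).hasDerivAt) hshift hg hg'
    (hw'.comp (by fun_prop)).aestronglyMeasurable (fun _ => hwb _) (fun _ => hw'b _), mul_neg]

lemma crossCorr_deriv_eq_crossCorr_deriv_left (hfd : Differentiable ℝ f) (hf : Integrable f)
    (hf' : Integrable (deriv f)) (hg : Integrable g) (hw : Differentiable ℝ w)
    (hw' : Continuous (deriv w)) (hwb : ∀ x, |w x| ≤ M₀) (hw'b : ∀ x, |deriv w x| ≤ M₁)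
    (h : ℝ) : crossCorr f g (deriv w) h = crossCorr (deriv f) g w h := by
  rw [crossCorr, crossCorr, Measure.volume_eq_prod,
    integral_prod_symm _ (integrable_crossCorr_integrand hf hg hw' hw'b h),
    integral_prod_symm _ (integrable_crossCorr_integrand hf' hg hw.continuous hwb h)]
  congr 1 with s₂
  have hreflect (x : ℝ) :
      HasDerivAt (fun s => w (s₂ - s + h)) (-deriv w (s₂ - x + h)) x := by
    simpa [Function.comp_def] using
      (hw _).hasDerivAt.comp x (((hasDerivAt_id' x).const_sub s₂).add_const h)
  have hibp := integral_mul_deriv_eq_neg_of_bounded (fun x => (hfd x).hasDerivAt) hreflect hf hf'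
    (hw'.comp (by fun_prop)).neg.aestronglyMeasurable (fun _ => hwb _)
    (fun _ => (abs_neg _).trans_le (hw'b _))
  simp only [mul_neg, integral_neg, neg_inj] at hibp
  simp_rw [mul_right_comm _ (g s₂), integral_mul_const, hibp]

end CrossCorr

theorem melnikov_autocorrelation_second_deriv_general
    (F r : ℝ → ℝ) (C lam : ℝ) (hlam : 0 < lam)
    (hF : ContDiff ℝ 1 F)
    (hFb : ∀ s : ℝ, |F s| ≤ C * Real.exp (-lam * |s|))
    (hF'b : ∀ s : ℝ, |deriv F s| ≤ C * Real.exp (-lam * |s|))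
    (hr : ContDiff ℝ 2 r)
    (hrb : ∃ M₀, ∀ x : ℝ, |r x| ≤ M₀)
    (hr'b : ∃ M₁, ∀ x : ℝ, |deriv r x| ≤ M₁) :
    (∀ h : ℝ, DifferentiableAt ℝ
      (fun h' : ℝ => ∫ s₁ : ℝ, ∫ s₂ : ℝ, F s₁ * F s₂ * r (s₂ - s₁ + h')) h) ∧
    (∀ h : ℝ, DifferentiableAt ℝ
      (deriv fun h' : ℝ => ∫ s₁ : ℝ, ∫ s₂ : ℝ, F s₁ * F s₂ * r (s₂ - s₁ + h')) h) ∧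
    (∀ h : ℝ,
      deriv (deriv fun h' : ℝ => ∫ s₁ : ℝ, ∫ s₂ : ℝ, F s₁ * F s₂ * r (s₂ - s₁ + h')) h
        = -∫ s₁ : ℝ, ∫ s₂ : ℝ, deriv F s₁ * deriv F s₂ * r (s₂ - s₁ + h)) ∧
    (-(deriv (deriv fun h' : ℝ =>
        ∫ s₁ : ℝ, ∫ s₂ : ℝ, F s₁ * F s₂ * r (s₂ - s₁ + h')) 0)
      = ∫ s₁ : ℝ, ∫ s₂ : ℝ, deriv F s₁ * deriv F s₂ * r (s₂ - s₁)) := by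
  obtain ⟨M₀, hM₀⟩ := hrb
  obtain ⟨M₁, hM₁⟩ := hr'b
  have hFd : Differentiable ℝ F := hF.differentiable one_ne_zero
  have hFi : Integrable F :=
    integrable_of_abs_le_mul_exp_neg_mul_abs hlam hF.continuous.aestronglyMeasurable hFb
  have hF'i : Integrable (deriv F) := integrable_of_abs_le_mul_exp_neg_mul_abs hlam
    (hF.continuous_deriv le_rfl).aestronglyMeasurable hF'b
  have hrd : Differentiable ℝ r := hr.differentiable two_ne_zero
  have hr' : Continuous (deriv r) := hr.continuous_deriv one_le_two
  have hρ : (fun h' => ∫ s₁, ∫ s₂, F s₁ * F s₂ * r (s₂ - s₁ + h')) = crossCorr F F r :=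
    funext fun h => (crossCorr_eq_integral_integral hFi hFi hrd.continuous hM₀ h).symm
  have hρ' (h : ℝ) : HasDerivAt (crossCorr F F r) (-crossCorr F (deriv F) r h) h := by
    simpa only [crossCorr_deriv_eq_neg_crossCorr_deriv_right hFi hFd hFi hF'i hrd hr' hM₀ hM₁]
      using hasDerivAt_crossCorr hFi hFi hrd hr' hM₀ hM₁ h
  have hρ'' (h : ℝ) : HasDerivAt (-crossCorr F (deriv F) r)
      (-crossCorr (deriv F) (deriv F) r h) h := by
    simpa only [crossCorr_deriv_eq_crossCorr_deriv_left hFd hFi hF'i hF'i hrd hr' hM₀ hM₁]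
      using (hasDerivAt_crossCorr hFi hF'i hrd hr' hM₀ hM₁ h).neg
  have hderiv : deriv (crossCorr F F r) = -crossCorr F (deriv F) r :=
    funext fun h => (hρ' h).deriv
  have hsecond (h : ℝ) : deriv (deriv fun h' => ∫ s₁, ∫ s₂, F s₁ * F s₂ * r (s₂ - s₁ + h')) h
      = -∫ s₁, ∫ s₂, deriv F s₁ * deriv F s₂ * r (s₂ - s₁ + h) := by
    rw [hρ, hderiv, (hρ'' h).deriv,
      crossCorr_eq_integral_integral hF'i hF'i hrd.continuous hM₀]
  refine ⟨fun h => hρ ▸ (hρ' h).differentiableAt,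
    fun h => hρ ▸ hderiv ▸ (hρ'' h).differentiableAt, hsecond, ?_⟩
  rw [hsecond 0, neg_neg]
  simp only [add_zero]

/-- Second derivative of the autocorrelation of the Melnikov process
(second spectral moment formula). -/
theorem melnikov_autocorrelation_second_deriv
    (F r : ℝ → ℝ) (C lam : ℝ) (hC : 0 ≤ C) (hlam : 0 < lam)
    (hF : ContDiff ℝ 1 F)
    (hFb : ∀ s : ℝ, |F s| ≤ C * Real.exp (-lam * |s|))
    (hF'b : ∀ s : ℝ, |deriv F s| ≤ C * Real.exp (-lam * |s|))
    (hr : ContDiff ℝ 2 r)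
    (hrb : ∃ M₀, ∀ x : ℝ, |r x| ≤ M₀)
    (hr'b : ∃ M₁, ∀ x : ℝ, |deriv r x| ≤ M₁)
    (hr''b : ∃ M₂, ∀ x : ℝ, |deriv (deriv r) x| ≤ M₂) :
    (∀ h : ℝ, DifferentiableAt ℝ
      (fun h' : ℝ => ∫ s₁ : ℝ, ∫ s₂ : ℝ, F s₁ * F s₂ * r (s₂ - s₁ + h')) h) ∧
    (∀ h : ℝ, DifferentiableAt ℝ
      (deriv fun h' : ℝ => ∫ s₁ : ℝ, ∫ s₂ : ℝ, F s₁ * F s₂ * r (s₂ - s₁ + h')) h) ∧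
    (∀ h : ℝ,
      deriv (deriv fun h' : ℝ => ∫ s₁ : ℝ, ∫ s₂ : ℝ, F s₁ * F s₂ * r (s₂ - s₁ + h')) h
        = -∫ s₁ : ℝ, ∫ s₂ : ℝ, deriv F s₁ * deriv F s₂ * r (s₂ - s₁ + h)) ∧
    (-(deriv (deriv fun h' : ℝ =>
        ∫ s₁ : ℝ, ∫ s₂ : ℝ, F s₁ * F s₂ * r (s₂ - s₁ + h')) 0)
      = ∫ s₁ : ℝ, ∫ s₂ : ℝ, deriv F s₁ * deriv F s₂ * r (s₂ - s₁)) :=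
  melnikov_autocorrelation_second_deriv_general F r C lam hlam hF hFb hF'b hr hrb hr'b
end
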